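/- The function G_{z,α,ν} is differentiable on ℝ with a Lipschitz continuous derivative G′_{z,α,ν} that satisfies inf_{x∈ℝ} G′_{z,α,ν}(x) > 0; in particular, G_{z,α,ν} has an inverse G_{z,α,ν}^{−1}: ℝ → ℝ that is Lipschitz continuous. (Lemma 4.1(i).) -/

import Mathlib

/-!
Each summand of `G` is `α_i ν² b((x - z_i)/ν)` with `b(u) = u|u|φ(u)`, whose derivative `b'` is
Lipschitz, bounded by `8` and vanishes outside `(-1, 1)`. Consecutive `z_i` are more than `2ν`
apart, so at each `x` at most one summand has non-zero derivative, whence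
`G' ≥ 1 - 8ν|α_i| > 0` there. A derivative bounded below by `m > 0` makes `G` surjective and
antilipschitz with constant `1/m`, so its inverse is `1/m`-Lipschitz.
-/

open MeasureTheory ProbabilityTheory Filter Set
open scoped ENNReal NNReal

noncomputable section

namespace AdaptiveQM

/-- The open interval `(ξ_{i-1}, ξ_i)` (with `ξ₀ = -∞`, `ξ_{k+1} = ∞`) determined by the
strictly increasing family `ξ : Fin k → ℝ`. -/
def piece {k : ℕ} (ξ : Fin k → ℝ) (i : Fin (k + 1)) : Set ℝ :=
  {x | (∀ j : Fin k, (j : ℕ) < (i : ℕ) → ξ j < x) ∧ ∀ j : Fin k, (i : ℕ) ≤ (j : ℕ) → x < ξ j}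

/-- Assumption (μ1)/(σ piecewise Lipschitz): Lipschitz continuity on each interval
`(ξ_{i-1}, ξ_i)`. -/
def PiecewiseLipschitz {k : ℕ} (ξ : Fin k → ℝ) (f : ℝ → ℝ) : Prop :=
  ∀ i : Fin (k + 1), ∃ L : ℝ≥0, LipschitzOnWith L f (piece ξ i)

/-- Assumptions (μ2)/(σ2): `f` has a Lipschitz continuous derivative on each interval
`(ξ_{i-1}, ξ_i)`. -/
def PiecewiseC1Lipschitz {k : ℕ} (ξ : Fin k → ℝ) (f : ℝ → ℝ) : Prop :=
  ∀ i : Fin (k + 1), ∃ (f' : ℝ → ℝ) (L : ℝ≥0),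
    (∀ x ∈ piece ξ i, HasDerivAt f (f' x) x) ∧ LipschitzOnWith L f' (piece ξ i)

/-- `W` is a one-dimensional Brownian motion on `(Ω, F, P)`. -/
structure IsBrownianMotion {Ω : Type*} [MeasurableSpace Ω] (P : Measure Ω)
    (W : ℝ → Ω → ℝ) : Prop where
  meas : ∀ t, Measurable (W t)
  init : ∀ᵐ ω ∂P, W 0 ω = 0
  cont : ∀ᵐ ω ∂P, Continuous fun t => W t ω
  gauss : ∀ s t : ℝ, 0 ≤ s → s ≤ t →
    P.map (fun ω => W t ω - W s ω) = gaussianReal 0 (Real.toNNReal (t - s))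
  indep : ∀ (n : ℕ) (t : Fin (n + 1) → ℝ), Monotone t → (∀ i, 0 ≤ t i) →
    iIndepFun (m := fun _ : Fin n => (inferInstance : MeasurableSpace ℝ))
      (fun i ω => W (t i.succ) ω - W (t i.castSucc) ω) P

/-- `ε₁^δ = √δ · log²(1/δ)`. -/
def eps1 (δ : ℝ) : ℝ := Real.sqrt δ * (Real.log (1 / δ)) ^ 2

/-- `ε₂^δ = δ · log⁴(1/δ)`. -/
def eps2 (δ : ℝ) : ℝ := δ * (Real.log (1 / δ)) ^ 4

/-- The adaptive step-size function `h^δ`. -/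
def stepSize (Θ : Set ℝ) (δ x : ℝ) : ℝ :=
  if Metric.infDist x Θ < eps2 δ then δ ^ 2 * (Real.log (1 / δ)) ^ 4
  else if Metric.infDist x Θ < eps1 δ then (Metric.infDist x Θ / (Real.log (1 / δ)) ^ 2) ^ 2
  else δ

/-- One quasi-Milstein step: value at time `t` started from value `y` at time `u`, driven by
the path `w`.  Note `deriv s y = s'(y)` if `s` is differentiable at `y` and `0` otherwise. -/
def milsteinStep (b s : ℝ → ℝ) (y u t : ℝ) (w : ℝ → ℝ) : ℝ :=
  y + b y * (t - u) + s y * (w t - w u)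
    + (1 / 2) * (s y * deriv s y) * ((w t - w u) ^ 2 - (t - u))

variable {Ω : Type*}

/-- The grid of the adaptive quasi-Milstein scheme: `grid b s Θ x₀ W δ i ω = (τ_i^δ(ω), X̂^δ_{τ_i^δ}(ω))`. -/
def grid (b s : ℝ → ℝ) (Θ : Set ℝ) (x₀ : ℝ) (W : ℝ → Ω → ℝ) (δ : ℝ) :
    ℕ → Ω → ℝ × ℝ
  | 0 => fun _ => (0, x₀)
  | i + 1 => fun ω =>
      let p := grid b s Θ x₀ W δ i ω
      let t' := p.1 + stepSize Θ δ p.2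
      (t', milsteinStep b s p.2 p.1 t' fun u => W u ω)

/-- `τ_i^δ`. -/
def gridTime (b s : ℝ → ℝ) (Θ : Set ℝ) (x₀ : ℝ) (W : ℝ → Ω → ℝ) (δ : ℝ) (i : ℕ) (ω : Ω) : ℝ :=
  (grid b s Θ x₀ W δ i ω).1

/-- `X̂^δ_{τ_i^δ}`. -/
def gridVal (b s : ℝ → ℝ) (Θ : Set ℝ) (x₀ : ℝ) (W : ℝ → Ω → ℝ) (δ : ℝ) (i : ℕ) (ω : Ω) : ℝ :=
  (grid b s Θ x₀ W δ i ω).2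

/-- The largest index `i` with `τ_i^δ ≤ t`. -/
def lastIdx (b s : ℝ → ℝ) (Θ : Set ℝ) (x₀ : ℝ) (W : ℝ → Ω → ℝ) (δ t : ℝ) (ω : Ω) : ℕ :=
  sSup {i : ℕ | gridTime b s Θ x₀ W δ i ω ≤ t}

/-- `t̲^δ = max{τ_i^δ : τ_i^δ ≤ t}`. -/
def lastTime (b s : ℝ → ℝ) (Θ : Set ℝ) (x₀ : ℝ) (W : ℝ → Ω → ℝ) (δ t : ℝ) (ω : Ω) : ℝ :=
  gridTime b s Θ x₀ W δ (lastIdx b s Θ x₀ W δ t ω) ω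

/-- `X̂^δ_{t̲^δ}`. -/
def lastVal (b s : ℝ → ℝ) (Θ : Set ℝ) (x₀ : ℝ) (W : ℝ → Ω → ℝ) (δ t : ℝ) (ω : Ω) : ℝ :=
  gridVal b s Θ x₀ W δ (lastIdx b s Θ x₀ W δ t ω) ω

/-- The time-continuous adaptive quasi-Milstein scheme `X̂^δ_t`. -/
def scheme (b s : ℝ → ℝ) (Θ : Set ℝ) (x₀ : ℝ) (W : ℝ → Ω → ℝ) (δ t : ℝ) (ω : Ω) : ℝ :=
  milsteinStep b s (lastVal b s Θ x₀ W δ t ω) (lastTime b s Θ x₀ W δ t ω) t fun u => W u ω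

/-- `N(X̂^δ_1) = min{i ∈ ℕ : τ_i^δ ≥ 1}`, the number of evaluations of `W`. -/
def numSteps (b s : ℝ → ℝ) (Θ : Set ℝ) (x₀ : ℝ) (W : ℝ → Ω → ℝ) (δ : ℝ) (ω : Ω) : ℕ :=
  sInf {i : ℕ | 1 ≤ gridTime b s Θ x₀ W δ i ω}

/-- The augmented filtration `F_t = σ(σ(W_s : 0 ≤ s ≤ t) ∪ N)` generated by `W`. -/
def augFilt [MeasurableSpace Ω] (P : Measure Ω) (W : ℝ → Ω → ℝ) (t : ℝ) :
    MeasurableSpace Ω :=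
  (⨆ s ∈ Set.Icc (0 : ℝ) t, MeasurableSpace.comap (W s) inferInstance) ⊔
    MeasurableSpace.generateFrom {A | MeasurableSet A ∧ P A = 0}

/-- `τ` is a stopping time with respect to the augmented Brownian filtration. -/
def IsAugStoppingTime [MeasurableSpace Ω] (P : Measure Ω) (W : ℝ → Ω → ℝ) (τ : Ω → ℝ) :
    Prop :=
  ∀ t : ℝ, MeasurableSet[augFilt P W t] {ω | τ ω ≤ t}

/-- The σ-algebra `F_τ` of the `τ`-past. -/
def stoppedSigma [MeasurableSpace Ω] (P : Measure Ω) (W : ℝ → Ω → ℝ) (τ : Ω → ℝ) :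
    MeasurableSpace Ω :=
  MeasurableSpace.generateFrom
    {A | MeasurableSet A ∧ ∀ t : ℝ, MeasurableSet[augFilt P W t] (A ∩ {ω | τ ω ≤ t})}

/-- The shifted process `W^τ_t = W_{τ+t} - W_τ`. -/
def shiftedBM (W : ℝ → Ω → ℝ) (τ : Ω → ℝ) : ℝ → Ω → ℝ :=
  fun t ω => W (τ ω + t) ω - W (τ ω) ω

/-- Left-point Riemann sums for the Itô integral `∫₀ᵗ H dW` along dyadic partitions. -/
def riemannSum (H : ℝ → Ω → ℝ) (W : ℝ → Ω → ℝ) (t : ℝ) (n : ℕ) (ω : Ω) : ℝ :=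
  ∑ i ∈ Finset.range (2 ^ n),
    H (t * i / 2 ^ n) ω * (W (t * (i + 1) / 2 ^ n) ω - W (t * i / 2 ^ n) ω)

/-- `X` is a strong solution of `dX_t = b(X_t) dt + s(X_t) dW_t`, `X₀ = x₀`: it is adapted to
the Brownian motion, has continuous paths, and satisfies the integral equation, the stochastic
integral being the limit in probability of left-point Riemann sums. -/
def IsStrongSolution [MeasurableSpace Ω] (P : Measure Ω) (W : ℝ → Ω → ℝ)
    (b s : ℝ → ℝ) (x₀ : ℝ) (X : ℝ → Ω → ℝ) : Prop :=
  (∀ t, Measurable (X t)) ∧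
  (∀ᵐ ω ∂P, Continuous fun t => X t ω) ∧
  (∀ᵐ ω ∂P, X 0 ω = x₀) ∧
  (∀ t : ℝ, 0 ≤ t → ∃ g : (ℝ → ℝ) → ℝ, Measurable g ∧
    ∀ᵐ ω ∂P, X t ω = g fun u => W (min u t) ω) ∧
  (∀ t : ℝ, 0 ≤ t →
    TendstoInMeasure P (fun n ω => riemannSum (fun u ω' => s (X u ω')) W t n ω) atTop
      fun ω => X t ω - x₀ - ∫ u in (0 : ℝ)..t, b (X u ω))

/-- The bump function `φ(x) = (1-x²)⁴ · 1_{[-1,1]}(x)`. -/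
def phiBump (x : ℝ) : ℝ := if x ∈ Set.Icc (-1 : ℝ) 1 then (1 - x ^ 2) ^ 4 else 0

/-- `ρ_{z,α}`, with the convention `1/0 = ∞`. -/
def rho {k : ℕ} (z α : Fin k → ℝ) : ℝ≥0∞ :=
  (⨅ i : Fin k, if α i = 0 then ⊤ else ENNReal.ofReal (1 / (8 * |α i|))) ⊓
    ⨅ i : Fin k, ⨅ j : Fin k,
      if (i : ℕ) + 1 = (j : ℕ) then ENNReal.ofReal ((z j - z i) / 2) else ⊤

/-- The transformation `G_{z,α,ν}`. -/
def Gmap {k : ℕ} (z α : Fin k → ℝ) (ν : ℝ) (x : ℝ) : ℝ :=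
  x + ∑ i : Fin k, α i * (x - z i) * |x - z i| * phiBump ((x - z i) / ν)

/-- The inverse `G_{z,α,ν}^{-1}`. -/
def Ginv {k : ℕ} (z α : Fin k → ℝ) (ν : ℝ) : ℝ → ℝ := Function.invFun (Gmap z α ν)

/-- `α_i = (μ(ξ_i-) - μ(ξ_i+)) / (2σ²(ξ_i))`. -/
def alphaCoef (b s : ℝ → ℝ) {k : ℕ} (ξ : Fin k → ℝ) (i : Fin k) : ℝ :=
  (Function.leftLim b (ξ i) - Function.rightLim b (ξ i)) / (2 * (s (ξ i)) ^ 2)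

open Classical in
/-- `G''_{ξ,α,ν}` extended to all of `ℝ` by
`G''(ξ_i) = 2α_i + 2(μ(ξ_i+) - μ(ξ_i))/σ²(ξ_i)`. -/
def GsecondExt (b s : ℝ → ℝ) {k : ℕ} (ξ : Fin k → ℝ) (ν : ℝ) (x : ℝ) : ℝ :=
  if h : ∃ i, ξ i = x then
    2 * alphaCoef b s ξ h.choose + 2 * (Function.rightLim b x - b x) / (s x) ^ 2
  else deriv (deriv (Gmap ξ (alphaCoef b s ξ) ν)) x

/-- The transformed drift `μ̃ = (G'·μ + ½G''·σ²) ∘ G⁻¹`. -/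
def tildeDrift (b s : ℝ → ℝ) {k : ℕ} (ξ : Fin k → ℝ) (ν : ℝ) (x : ℝ) : ℝ :=
  deriv (Gmap ξ (alphaCoef b s ξ) ν) (Ginv ξ (alphaCoef b s ξ) ν x) *
      b (Ginv ξ (alphaCoef b s ξ) ν x) +
    (1 / 2) * GsecondExt b s ξ ν (Ginv ξ (alphaCoef b s ξ) ν x) *
      (s (Ginv ξ (alphaCoef b s ξ) ν x)) ^ 2

/-- The transformed diffusion coefficient `σ̃ = (G'·σ) ∘ G⁻¹`. -/
def tildeDiff (b s : ℝ → ℝ) {k : ℕ} (ξ : Fin k → ℝ) (ν : ℝ) (x : ℝ) : ℝ :=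
  deriv (Gmap ξ (alphaCoef b s ξ) ν) (Ginv ξ (alphaCoef b s ξ) ν x) *
    s (Ginv ξ (alphaCoef b s ξ) ν x)

/-- The set `S = (⋃ᵢ (ξ_{i-1},ξ_i)²)ᶜ ⊆ ℝ²`. -/
def badSet {k : ℕ} (ξ : Fin k → ℝ) : Set (ℝ × ℝ) :=
  (⋃ i : Fin (k + 1), (piece ξ i) ×ˢ (piece ξ i))ᶜ

open Topology

lemma lipschitzWith_finset_sum {X E ι : Type*} [PseudoEMetricSpace X]
    [SeminormedAddCommGroup E] (s : Finset ι) {K : ι → ℝ≥0} {f : ι → X → E}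
    (h : ∀ i ∈ s, LipschitzWith (K i) (f i)) :
    LipschitzWith (∑ i ∈ s, K i) fun x => ∑ i ∈ s, f i x := by
  classical
  induction s using Finset.induction_on with
  | empty => simpa using LipschitzWith.const (0 : E)
  | insert i s hi ih =>
    simp only [Finset.sum_insert hi]
    exact (h i (Finset.mem_insert_self i s)).add
      (ih fun j hj => h j (Finset.mem_insert_of_mem hj))

section LowerBoundedDeriv

variable {f : ℝ → ℝ}

lemma monotone_sub_mul_of_le_deriv {m : ℝ} (hf : Differentiable ℝ f)
    (h : ∀ x, m ≤ deriv f x) : Monotone fun x => f x - m * x := by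
  have hd (x : ℝ) : HasDerivAt (fun x => f x - m * x) (deriv f x - m) x := by
    simpa using (hf x).hasDerivAt.fun_sub ((hasDerivAt_id' x).const_mul m)
  refine monotone_of_deriv_nonneg (fun x => (hd x).differentiableAt) fun x => ?_
  rw [(hd x).deriv]
  linarith [h x]

lemma mul_abs_sub_le_abs_sub_of_le_deriv {m : ℝ} (hf : Differentiable ℝ f)
    (h : ∀ x, m ≤ deriv f x) (x y : ℝ) : m * |x - y| ≤ |f x - f y| := by
  wlog hxy : y ≤ x generalizing x y
  · rw [abs_sub_comm x, abs_sub_comm (f x)]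
    exact this y x (le_of_not_ge hxy)
  have hmono := monotone_sub_mul_of_le_deriv hf h hxy
  rw [abs_of_nonneg (sub_nonneg.2 hxy)]
  exact le_trans (by linarith) (le_abs_self _)

variable {m : ℝ≥0}

lemma antilipschitzWith_of_le_deriv (hm : 0 < m) (hf : Differentiable ℝ f)
    (h : ∀ x, (m : ℝ) ≤ deriv f x) : AntilipschitzWith m⁻¹ f :=
  AntilipschitzWith.of_le_mul_dist fun x y => by
    rw [NNReal.coe_inv, Real.dist_eq, Real.dist_eq, inv_mul_eq_div,
      le_div_iff₀' (NNReal.coe_pos.2 hm)]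
    exact mul_abs_sub_le_abs_sub_of_le_deriv hf h x y

lemma surjective_of_le_deriv (hm : 0 < m) (hf : Differentiable ℝ f)
    (h : ∀ x, (m : ℝ) ≤ deriv f x) : Function.Surjective f := by
  have hmono := monotone_sub_mul_of_le_deriv hf h
  have hm' : (0 : ℝ) < m := NNReal.coe_pos.2 hm
  refine hf.continuous.surjective ?_ ?_
  · refine tendsto_atTop_mono' atTop ?_
      (tendsto_atTop_add_const_left _ (f 0) (tendsto_id.const_mul_atTop hm'))
    filter_upwards [eventually_ge_atTop 0] with x hx
    have := hmono hx
    simp only [mul_zero, sub_zero] at this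
    simp only [id]
    linarith
  · refine tendsto_atBot_mono' atBot ?_
      (tendsto_atBot_add_const_left _ (f 0) (tendsto_id.const_mul_atBot hm'))
    filter_upwards [eventually_le_atBot 0] with x hx
    have := hmono hx
    simp only [mul_zero, sub_zero] at this
    simp only [id]
    linarith

end LowerBoundedDeriv

section BumpProfile


def bumpProfile (u : ℝ) : ℝ := u * |u| * phiBump u

/-- Written through `s = min |u| 1`, so that it is visibly a polynomial composed with a
`1`-Lipschitz map. -/
def bumpProfileDeriv (u : ℝ) : ℝ :=
  2 * min |u| 1 * (1 - min |u| 1 ^ 2) ^ 3 * (1 - 5 * min |u| 1 ^ 2)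

lemma phiBump_eq_max_pow (x : ℝ) : phiBump x = max (1 - x ^ 2) 0 ^ 4 := by
  unfold phiBump
  split_ifs with h
  · rw [max_eq_left (by nlinarith [h.1, h.2])]
  · rw [max_eq_right, zero_pow four_ne_zero]
    simp only [Set.mem_Icc, not_and_or, not_le] at h
    rcases h with h | h <;> nlinarith

lemma hasDerivAt_mul_abs (y : ℝ) : HasDerivAt (fun t : ℝ => t * |t|) (2 * |y|) y := by
  rcases lt_trichotomy y 0 with hy | rfl | hy
  · have h : HasDerivAt (fun t : ℝ => -(t * t)) (2 * |y|) y := by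
      refine ((hasDerivAt_id y).fun_mul (hasDerivAt_id y)).fun_neg.congr_deriv ?_
      simp [abs_of_neg hy]; ring
    refine h.congr_of_eventuallyEq ?_
    filter_upwards [Iio_mem_nhds hy] with t ht
    rw [abs_of_neg ht]; ring
  · rw [abs_zero, mul_zero, hasDerivAt_iff_tendsto_slope]
    have h : (fun t : ℝ => |t|) =ᶠ[𝓝[≠] (0 : ℝ)] slope (fun t : ℝ => t * |t|) 0 := by
      filter_upwards [self_mem_nhdsWithin] with t ht
      rw [slope_def_field, sub_zero, zero_mul, sub_zero, mul_div_cancel_left₀ _ ht]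
    exact (continuous_abs.tendsto' 0 0 abs_zero).mono_left nhdsWithin_le_nhds |>.congr' h
  · have h : HasDerivAt (fun t : ℝ => t * t) (2 * |y|) y := by
      refine ((hasDerivAt_id y).fun_mul (hasDerivAt_id y)).congr_deriv ?_
      simp [abs_of_pos hy]; ring
    refine h.congr_of_eventuallyEq ?_
    filter_upwards [Ioi_mem_nhds hy] with t ht
    rw [abs_of_pos ht]

lemma hasDerivAt_max_zero_pow_four (x : ℝ) :
    HasDerivAt (fun t : ℝ => max t 0 ^ 4) (4 * max x 0 ^ 3) x := by
  -- `max t 0 ^ 4 = ((t² + t|t|) / 2)²` expresses it through `t ↦ t|t|`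
  have hpow : (fun t : ℝ => ((t ^ 2 + t * |t|) / 2) ^ 2) = fun t : ℝ => max t 0 ^ 4 := by
    funext t
    rcases le_total 0 t with h | h
    · rw [max_eq_left h, abs_of_nonneg h]; ring
    · rw [max_eq_right h, abs_of_nonpos h]; ring
  have h := (((hasDerivAt_pow 2 x).fun_add (hasDerivAt_mul_abs x)).div_const 2).fun_pow 2
  rw [hpow] at h
  refine h.congr_deriv ?_
  push_cast
  rcases le_total 0 x with hx | hx
  · rw [max_eq_left hx, abs_of_nonneg hx]; ring
  · rw [max_eq_right hx, abs_of_nonpos hx]; ring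

lemma hasDerivAt_bumpProfile (u : ℝ) : HasDerivAt bumpProfile (bumpProfileDeriv u) u := by
  have hM : HasDerivAt (fun t : ℝ => max (1 - t ^ 2) 0 ^ 4)
      (4 * max (1 - u ^ 2) 0 ^ 3 * (-(2 * u))) u := by
    refine ((hasDerivAt_max_zero_pow_four _).comp u
      ((hasDerivAt_const u (1 : ℝ)).fun_sub (hasDerivAt_pow 2 u))).congr_deriv ?_
    push_cast
    ring
  have h := (hasDerivAt_mul_abs u).fun_mul hM
  simp only [← phiBump_eq_max_pow] at h
  refine h.congr_deriv ?_
  rw [phiBump_eq_max_pow, bumpProfileDeriv]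
  rcases le_total |u| 1 with hu | hu
  · have hu2 : u ^ 2 ≤ 1 := by nlinarith [sq_abs u, abs_nonneg u]
    rw [min_eq_left hu, max_eq_left (by linarith)]
    rcases abs_choice u with h | h <;> rw [h] <;> ring
  · have hu2 : 1 ≤ u ^ 2 := by nlinarith [sq_abs u]
    rw [min_eq_right hu, max_eq_right (by linarith)]
    ring

lemma bumpProfileDeriv_eq_zero {u : ℝ} (hu : 1 ≤ |u|) : bumpProfileDeriv u = 0 := by
  rw [bumpProfileDeriv, min_eq_right hu]
  ring

lemma abs_bumpProfileDeriv_le (u : ℝ) : |bumpProfileDeriv u| ≤ 8 := by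
  have hs₀ : 0 ≤ min |u| 1 := le_min (abs_nonneg u) zero_le_one
  have hs₁ : min |u| 1 ≤ 1 := min_le_right _ _
  have hs₂ : min |u| 1 ^ 2 ≤ 1 := pow_le_one₀ hs₀ hs₁
  have h₁ : |(1 - min |u| 1 ^ 2) ^ 3| ≤ 1 := by
    rw [abs_of_nonneg (by simp [hs₂])]
    exact pow_le_one₀ (by linarith) (by nlinarith)
  have h₂ : |1 - 5 * min |u| 1 ^ 2| ≤ 4 := abs_le.2 ⟨by linarith, by nlinarith⟩
  calc |bumpProfileDeriv u|
      = 2 * min |u| 1 * |(1 - min |u| 1 ^ 2) ^ 3| * |1 - 5 * min |u| 1 ^ 2| := by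
        rw [bumpProfileDeriv, abs_mul, abs_mul, abs_mul, abs_two, abs_of_nonneg hs₀]
    _ ≤ 2 * 1 * 1 * 4 := by gcongr
    _ = 8 := by norm_num

lemma exists_lipschitzWith_bumpProfileDeriv : ∃ K, LipschitzWith K bumpProfileDeriv := by
  obtain ⟨K, hK⟩ : ∃ K, LipschitzOnWith K
      (fun s : ℝ => 2 * s * (1 - s ^ 2) ^ 3 * (1 - 5 * s ^ 2)) (Icc 0 1) :=
    (ContDiff.locallyLipschitz (𝕂 := ℝ) (by fun_prop)).locallyLipschitzOn
      |>.exists_lipschitzOnWith_of_compact isCompact_Icc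
  have hmin : LipschitzWith 1 fun u : ℝ => min |u| 1 :=
    lipschitzWith_one_norm.min_const 1
  refine ⟨K * 1, lipschitzOnWith_univ.1 ?_⟩
  exact hK.comp hmin.lipschitzOnWith fun u _ =>
    ⟨le_min (abs_nonneg u) zero_le_one, min_le_right _ _⟩

end BumpProfile

section Gmap

variable {k : ℕ} {z α : Fin k → ℝ} {ν : ℝ}

lemma mul_abs_mul_phiBump_div (hν : 0 < ν) (y : ℝ) :
    y * |y| * phiBump (y / ν) = ν ^ 2 * bumpProfile (y / ν) := by
  have hy : y = ν * (y / ν) := (mul_div_cancel₀ y hν.ne').symm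
  conv_lhs => rw [hy]
  rw [bumpProfile, abs_mul, abs_of_pos hν, mul_div_cancel_left₀ _ hν.ne']
  ring

lemma hasDerivAt_Gmap (hν : 0 < ν) (x : ℝ) :
    HasDerivAt (Gmap z α ν) (1 + ∑ i, α i * ν * bumpProfileDeriv ((x - z i) / ν)) x := by
  have hterm (i : Fin k) :
      HasDerivAt (fun t => α i * (t - z i) * |t - z i| * phiBump ((t - z i) / ν))
        (α i * ν * bumpProfileDeriv ((x - z i) / ν)) x := by
    have h := (((hasDerivAt_bumpProfile _).comp x
      (((hasDerivAt_id' x).sub_const (z i)).div_const ν)).const_mul (α i * ν ^ 2))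
    refine (h.congr_deriv ?_).congr_of_eventuallyEq (Eventually.of_forall fun t => ?_)
    · field_simp
    · simp only [Function.comp_apply, mul_assoc, mul_abs_mul_phiBump_div hν]
  exact (hasDerivAt_id' x).add (HasDerivAt.fun_sum fun i _ => hterm i)

lemma differentiable_Gmap (hν : 0 < ν) : Differentiable ℝ (Gmap z α ν) :=
  fun x => (hasDerivAt_Gmap hν x).differentiableAt

lemma deriv_Gmap (hν : 0 < ν) :
    deriv (Gmap z α ν) = fun x => 1 + ∑ i, α i * ν * bumpProfileDeriv ((x - z i) / ν) :=
  funext fun x => (hasDerivAt_Gmap hν x).deriv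

lemma exists_lipschitzWith_deriv_Gmap (hν : 0 < ν) :
    ∃ L, LipschitzWith L (deriv (Gmap z α ν)) := by
  obtain ⟨K, hK⟩ := exists_lipschitzWith_bumpProfileDeriv
  have hterm (i : Fin k) :
      ∃ L, LipschitzWith L fun x => α i * ν * bumpProfileDeriv ((x - z i) / ν) := by
    have h := (lipschitzWith_smul (α i * ν)).comp (hK.comp ((lipschitzWith_smul ν⁻¹).comp
      (LipschitzWith.id.sub (LipschitzWith.const (z i)))))
    simp only [Function.comp_def, smul_eq_mul, id, ← div_eq_inv_mul] at h
    exact ⟨_, h⟩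
  choose L hL using hterm
  rw [deriv_Gmap hν]
  exact ⟨_, (LipschitzWith.const 1).add (lipschitzWith_finset_sum _ fun i _ => hL i)⟩

lemma eight_mul_mul_abs_lt_one_of_lt_rho (hρ : ENNReal.ofReal ν < rho z α) (i : Fin k) :
    8 * ν * |α i| < 1 := by
  by_cases hα : α i = 0
  · simp [hα]
  have h := hρ.trans_le (inf_le_left.trans (iInf_le _ i))
  rw [if_neg hα, ENNReal.ofReal_lt_ofReal_iff'] at h
  have := (lt_div_iff₀ (by positivity : 0 < 8 * |α i|)).1 h.1
  linarith

lemma two_mul_lt_sub_of_lt_rho (hρ : ENNReal.ofReal ν < rho z α) {i j : Fin k}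
    (hij : (i : ℕ) + 1 = j) : 2 * ν < z j - z i := by
  have h := hρ.trans_le (inf_le_right.trans ((iInf_le _ i).trans (iInf_le _ j)))
  rw [if_pos hij, ENNReal.ofReal_lt_ofReal_iff'] at h
  linarith [h.1]

lemma two_mul_lt_sub_of_lt_rho_of_lt (hz : Monotone z) (hρ : ENNReal.ofReal ν < rho z α)
    {i j : Fin k} (hij : i < j) : 2 * ν < z j - z i := by
  have hj : (i : ℕ) + 1 < k := lt_of_le_of_lt hij (j.isLt)
  have := two_mul_lt_sub_of_lt_rho hρ (j := ⟨i + 1, hj⟩) rfl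
  have := hz (show (⟨i + 1, hj⟩ : Fin k) ≤ j from hij)
  linarith

lemma le_abs_sub_of_lt_rho (hz : Monotone z) (hρ : ENNReal.ofReal ν < rho z α) {i j : Fin k}
    (hij : i ≠ j) {x : ℝ} (hi : |x - z i| < ν) : ν ≤ |x - z j| := by
  have htri := abs_sub_le (z i) x (z j)
  rw [abs_sub_comm (z i) x] at htri
  rcases hij.lt_or_gt with h | h <;>
    linarith [two_mul_lt_sub_of_lt_rho_of_lt hz hρ h, abs_le.1 (le_refl |z i - z j|)]

lemma bumpProfileDeriv_div_eq_zero (hν : 0 < ν) {y : ℝ} (hy : ν ≤ |y|) :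
    bumpProfileDeriv (y / ν) = 0 :=
  bumpProfileDeriv_eq_zero <| by rwa [abs_div, abs_of_pos hν, le_div_iff₀ hν, one_mul]

lemma deriv_Gmap_of_le_abs_sub (hν : 0 < ν) {x : ℝ} (hx : ∀ i, ν ≤ |x - z i|) :
    deriv (Gmap z α ν) x = 1 := by
  simp [deriv_Gmap hν, bumpProfileDeriv_div_eq_zero hν (hx _)]

lemma deriv_Gmap_of_abs_sub_lt (hν : 0 < ν) (hz : Monotone z)
    (hρ : ENNReal.ofReal ν < rho z α) {x : ℝ} {i : Fin k} (hi : |x - z i| < ν) :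
    deriv (Gmap z α ν) x = 1 + α i * ν * bumpProfileDeriv ((x - z i) / ν) := by
  simp only [deriv_Gmap hν]
  rw [Finset.sum_eq_single i (fun j _ hji => ?_) (by simp)]
  rw [bumpProfileDeriv_div_eq_zero hν (le_abs_sub_of_lt_rho hz hρ hji.symm hi), mul_zero]

lemma one_sub_le_deriv_Gmap (hν : 0 < ν) (hz : Monotone z)
    (hρ : ENNReal.ofReal ν < rho z α) {x : ℝ} {i : Fin k} (hi : |x - z i| < ν) :
    1 - 8 * ν * |α i| ≤ deriv (Gmap z α ν) x := by
  have h : |α i * ν * bumpProfileDeriv ((x - z i) / ν)| ≤ |α i| * ν * 8 := by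
    rw [abs_mul, abs_mul, abs_of_pos hν]
    gcongr
    exact abs_bumpProfileDeriv_le _
  rw [deriv_Gmap_of_abs_sub_lt hν hz hρ hi]
  linarith [neg_abs_le (α i * ν * bumpProfileDeriv ((x - z i) / ν))]

lemma exists_pos_le_deriv_Gmap (hν : 0 < ν) (hz : Monotone z)
    (hρ : ENNReal.ofReal ν < rho z α) : ∃ m : ℝ, 0 < m ∧ ∀ x, m ≤ deriv (Gmap z α ν) x := by
  obtain ⟨m, ⟨hm1, hmα⟩, hm⟩ : ∃ m : ℝ, (m ≤ 1 ∧ ∀ i, m ≤ 1 - 8 * ν * |α i|) ∧ 0 < m := by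
    refine (Eventually.and ?_ self_mem_nhdsWithin).exists (f := 𝓝[>] (0 : ℝ))
    refine nhdsWithin_le_nhds (Eventually.and (eventually_le_nhds one_pos)
      (eventually_all.2 fun i => eventually_le_nhds ?_))
    linarith [eight_mul_mul_abs_lt_one_of_lt_rho hρ i]
  refine ⟨m, hm, fun x => ?_⟩
  by_cases hx : ∃ i, |x - z i| < ν
  · obtain ⟨i, hi⟩ := hx
    exact (hmα i).trans (one_sub_le_deriv_Gmap hν hz hρ hi)
  · simp only [not_exists, not_lt] at hx
    rw [deriv_Gmap_of_le_abs_sub hν hx]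
    exact hm1

end Gmap

theorem Gmap_differentiable_lipschitz_deriv_pos_general
    {k : ℕ} (z : Fin k → ℝ) (hz : StrictMono z) (α : Fin k → ℝ)
    (ν : ℝ) (hν : 0 < ν) (hν' : ENNReal.ofReal ν < rho z α) :
    Differentiable ℝ (Gmap z α ν) ∧
    (∃ L : ℝ≥0, LipschitzWith L (deriv (Gmap z α ν))) ∧
    (∃ m : ℝ, 0 < m ∧ ∀ x, m ≤ deriv (Gmap z α ν) x) ∧
    Function.Bijective (Gmap z α ν) ∧
    ∃ L : ℝ≥0, LipschitzWith L (Function.invFun (Gmap z α ν)) := by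
  obtain ⟨m, hm, hderiv⟩ := exists_pos_le_deriv_Gmap hν hz.monotone hν'
  lift m to ℝ≥0 using hm.le
  have hdiff : Differentiable ℝ (Gmap z α ν) := differentiable_Gmap hν
  have hsurj := surjective_of_le_deriv hm hdiff hderiv
  have hanti := antilipschitzWith_of_le_deriv hm hdiff hderiv
  exact ⟨hdiff, exists_lipschitzWith_deriv_Gmap hν, ⟨m, hm, hderiv⟩, ⟨hanti.injective, hsurj⟩,
    _, hanti.to_rightInverse (Function.rightInverse_invFun hsurj)⟩

/-- Lemma 4.1(i): `G_{z,α,ν}` is differentiable with a Lipschitz continuous derivative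
bounded below by a positive constant; in particular it has a Lipschitz continuous inverse. -/
theorem Gmap_differentiable_lipschitz_deriv_pos
    {k : ℕ} (hk : 0 < k) (z : Fin k → ℝ) (hz : StrictMono z) (α : Fin k → ℝ)
    (ν : ℝ) (hν : 0 < ν) (hν' : ENNReal.ofReal ν < rho z α) :
    Differentiable ℝ (Gmap z α ν) ∧
    (∃ L : ℝ≥0, LipschitzWith L (deriv (Gmap z α ν))) ∧
    (∃ m : ℝ, 0 < m ∧ ∀ x, m ≤ deriv (Gmap z α ν) x) ∧
    Function.Bijective (Gmap z α ν) ∧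
    ∃ L : ℝ≥0, LipschitzWith L (Function.invFun (Gmap z α ν)) :=
  Gmap_differentiable_lipschitz_deriv_pos_general z hz α ν hν hν'

end AdaptiveQM
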